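/- Let P be a simple d-polytope in E^d and let ε > 0 be such that δ := (1 − γ)/(1 + d) − ε·√d·α > 0. Then P_ε = ⋃_{v ∈ vert(P)} P^v_{ε,δ}. -/

import Mathlib

noncomputable section

open Metric Set Finset Matrix
open scoped RealInnerProductSpace BigOperators Classical

namespace AverkovHenk

abbrev E (d : ℕ) := EuclideanSpace ℝ (Fin d)

/-- Support function `h(P,u)` of `P` in direction `u`. -/
def supp {d : ℕ} (P : Set (E d)) (u : E d) : ℝ :=
  sSup ((fun x => ⟪u, x⟫) '' P)

/-- The normalized affine function `q_F` of the facet with outward unit normal `u`. -/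
def qf {d : ℕ} (P : Set (E d)) (u : E d) (x : E d) : ℝ :=
  (supp P u - ⟪u, x⟫) / Metric.diam P

/-- The exposed face of `P` in direction `u`. -/
def faceOf {d : ℕ} (P : Set (E d)) (u : E d) : Set (E d) :=
  {x ∈ P | ⟪u, x⟫ = supp P u}

/-- `u` is an outward unit normal of a facet (a `(d-1)`-dimensional face) of `P`. -/
def IsFacetNormal {d : ℕ} (P : Set (E d)) (u : E d) : Prop :=
  ‖u‖ = 1 ∧ Module.finrank ℝ ↥(vectorSpan ℝ (faceOf P u)) = d - 1

/-- The vertices of `P`, i.e. its extreme points. -/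
def vertices {d : ℕ} (P : Set (E d)) : Set (E d) := Set.extremePoints ℝ P

/-- The `l`-th elementary symmetric function of `y_1, …, y_m`. -/
def esymm {m : ℕ} (y : Fin m → ℝ) (l : ℕ) : ℝ :=
  ∑ J ∈ Finset.powersetCard l (Finset.univ : Finset (Fin m)), ∏ j ∈ J, y j

/-- A presentation of a convex `d`-polytope `P ⊆ E^d` by the `m` outward unit normals
`u 0, …, u (m-1)` of its facets, together with the induced representation
`P = {x | q_j(x) ≥ 0 for all j}`. -/
structure FacetRep (d m : ℕ) where
  P : Set (E d)
  u : Fin m → E d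
  convex : Convex ℝ P
  compact : IsCompact P
  fulldim : (interior P).Nonempty
  inj : Function.Injective u
  facet : ∀ j, IsFacetNormal P (u j)
  complete : ∀ w : E d, IsFacetNormal P w → ∃ j, w = u j
  rep : P = {x | ∀ j, 0 ≤ qf P (u j) x}

namespace FacetRep

variable {d m : ℕ}

/-- The vector `q(x) = (q_1(x), …, q_m(x))`. -/
def q (R : FacetRep d m) (x : E d) : Fin m → ℝ := fun j => qf R.P (R.u j) x

/-- The indices of the facets containing the point `v`. -/
def act (R : FacetRep d m) (v : E d) : Finset (Fin m) :=
  Finset.univ.filter fun j => R.q v j = 0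

/-- The polytope is simple: each vertex lies on exactly `d` facets. -/
def Simple (R : FacetRep d m) : Prop :=
  ∀ v ∈ vertices R.P, (R.act v).card = d

/-- The enlarged polytope `P_ε`. -/
def Peps (R : FacetRep d m) (ε : ℝ) : Set (E d) := {x | ∀ j, -ε ≤ R.q x j}

/-- The box `Π_{v,ε} = {x : |q_v(x)|_∞ ≤ ε}`. -/
def Piv (R : FacetRep d m) (v : E d) (ε : ℝ) : Set (E d) :=
  {x | ∀ j ∈ R.act v, |R.q x j| ≤ ε}

/-- The cone `C_v = {x : -σ_1(q_v(x)) ≥ (2/3)|q_v(x)|}` (Euclidean norm). -/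
def Cv (R : FacetRep d m) (v : E d) : Set (E d) :=
  {x | (2/3) * Real.sqrt (∑ j ∈ R.act v, (R.q x j)^2) ≤ -(∑ j ∈ R.act v, R.q x j)}

/-- The polytope `P^v_{ε,δ}`. -/
def Pv (R : FacetRep d m) (v : E d) (ε δ : ℝ) : Set (E d) :=
  {x | (∀ j ∈ R.act v, -ε ≤ R.q x j) ∧ ∀ j ∉ R.act v, δ ≤ R.q x j}

/-- `γ = max{1 - q_F(v) : F a facet, v a vertex not on F}`. -/
def gam (R : FacetRep d m) : ℝ :=
  sSup {c | ∃ v ∈ vertices R.P, ∃ j, R.q v j ≠ 0 ∧ c = 1 - R.q v j}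

/-- The polynomial `f_k` built from weights `y_v` over the vertex set `V`. -/
def fk (R : FacetRep d m) (V : Finset (E d)) (y : ↥V → ℝ) (k : ℕ) (x : E d) : ℝ :=
  ∑ v : ↥V, y v * ((∑ j ∈ R.act v.1, (1 - R.q x j)^(2*k)) / (R.act v.1).card)^(2*k)

/-- The matrix `A_k` indexed by the vertex set `V`. -/
def Ak (R : FacetRep d m) (V : Finset (E d)) (k : ℕ) : Matrix ↥V ↥V ℝ :=
  Matrix.of fun w v : ↥V => ((∑ j ∈ R.act v.1, (1 - R.q w.1 j)^(2*k)) / (R.act v.1).card)^(2*k)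

/-- `deg(P)`: the maximal number of facets through a vertex. -/
def degP (R : FacetRep d m) (V : Finset (E d)) : ℕ := V.sup fun v => (R.act v).card

end FacetRep

/-- `|U_s^{-1}|_2` where `U_s` is the matrix with rows `u_j^T`, `j ∈ s`: the supremum of `‖x‖`
over the set where the Euclidean norm of `U_s x` is at most `1`. -/
def invNormU {d m : ℕ} (u : Fin m → E d) (s : Finset (Fin m)) : ℝ :=
  sSup {c | ∃ x : E d, Real.sqrt (∑ j ∈ s, (⟪u j, x⟫)^2) ≤ 1 ∧ c = ‖x‖}

/-- `α = max_{v ∈ vert(P)} |U_v^{-1}|_2`. -/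
def alpha {d m : ℕ} (R : FacetRep d m) (V : Finset (E d)) : ℝ :=
  sSup {a | ∃ v ∈ V, a = invNormU R.u (R.act v)}

/-- The normal cone `N(Q,x) = {u : ⟨x,u⟩ = h(Q,u)}`. -/
def normalCone {d : ℕ} (Q : Set (E d)) (x : E d) : Set (E d) :=
  {u | ⟪u, x⟫ = supp Q u}

/-- `S` is an edge (a 1-dimensional face) of `P`. -/
def IsEdgeOf {d : ℕ} (P S : Set (E d)) : Prop :=
  IsExposed ℝ P S ∧ Module.finrank ℝ ↥(vectorSpan ℝ S) = 1

/-!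
For `x ∈ P_ε` let `y` be the point of `P` nearest to `x`. Pick a vertex `v` lying on every
facet through `y`; by simplicity the `d` normals at `v` form a basis, and testing `x - y` against
the dual basis shows `x - y = ∑ μ_j u_j` with `μ ≥ 0` supported on the facets through `y`. Hence
`‖x - y‖² = ∑ μ_j ⟪u_j, x - y⟫ ≤ ε diam(P) ∑ μ_j ≤ ε diam(P) √d |U_v⁻¹|₂ ‖x - y‖`, so moving
from `y` to `x` lowers each `q_F` by at most `ε √d α`. By Carathéodory, `y` is a convex
combination of at most `d + 1` vertices, one of which, `v`, has weight at least `1/(d+1)`; as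
`q_F(v) ≥ 1 - γ` for every facet `F ∌ v`, we get `q_F(y) ≥ (1 - γ)/(1 + d)` for those facets.
-/

open scoped Topology

/-- The linear map `x ↦ U_s x`, where `U_s` has rows `u_jᵀ`, `j ∈ s`. -/
def innerMap {d m : ℕ} (u : Fin m → E d) (s : Finset (Fin m)) : E d →ₗ[ℝ] EuclideanSpace ℝ s where
  toFun x := WithLp.toLp 2 fun j => ⟪u j, x⟫
  map_add' x y := by ext j; simp [inner_add_right]
  map_smul' c x := by ext j; simp [inner_smul_right]

section InnerMap

variable {d m : ℕ} {u : Fin m → E d} {s : Finset (Fin m)}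

@[simp]
lemma innerMap_apply (x : E d) (j : s) : innerMap u s x j = ⟪u j, x⟫ := rfl

lemma norm_innerMap (x : E d) : ‖innerMap u s x‖ = √(∑ j ∈ s, ⟪u j, x⟫ ^ 2) := by
  rw [EuclideanSpace.norm_eq, ← Finset.sum_coe_sort s]
  simp

lemma invNormU_nonneg : 0 ≤ invNormU u s :=
  Real.sSup_nonneg fun _ ⟨x, _, hc⟩ => hc ▸ norm_nonneg x

lemma norm_le_invNormU_mul (hinj : Function.Injective (innerMap u s)) (z : E d) :
    ‖z‖ ≤ invNormU u s * ‖innerMap u s z‖ := by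
  obtain ⟨K, -, hK⟩ := (innerMap u s).exists_antilipschitzWith (LinearMap.ker_eq_bot.2 hinj)
  have hbdd : BddAbove {c | ∃ x : E d, √(∑ j ∈ s, ⟪u j, x⟫ ^ 2) ≤ 1 ∧ c = ‖x‖} := by
    refine ⟨K, ?_⟩
    rintro c ⟨x, hx, rfl⟩
    calc ‖x‖ ≤ K * ‖innerMap u s x‖ := ZeroHomClass.bound_of_antilipschitz _ hK x
      _ ≤ K := by rw [norm_innerMap]; exact mul_le_of_le_one_right K.2 hx
  rcases (norm_nonneg (innerMap u s z)).eq_or_lt with hN | hN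
  · have hz : z = 0 := hinj (by rw [map_zero]; exact norm_eq_zero.1 hN.symm)
    simp [hz]
  · rw [← div_le_iff₀ hN]
    refine le_csSup hbdd ⟨‖innerMap u s z‖⁻¹ • z, ?_, ?_⟩
    · rw [← norm_innerMap, map_smul, norm_smul, norm_inv, norm_norm, inv_mul_cancel₀ hN.ne']
    · rw [norm_smul, norm_inv, norm_norm, inv_mul_eq_div]

lemma exists_eq_sum_smul (hinj : Function.Injective (innerMap u s)) (z : E d) :
    ∃ μ : Fin m → ℝ, z = ∑ j ∈ s, μ j • u j := by
  have hspan : Submodule.span ℝ (u '' s) = ⊤ := by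
    refine Submodule.orthogonal_eq_bot_iff.1 <| (Submodule.eq_bot_iff _).2 fun w hw => hinj ?_
    ext j
    simpa using Submodule.inner_right_of_mem_orthogonal
      (Submodule.subset_span (Set.mem_image_of_mem u (Finset.mem_coe.2 j.2))) hw
  obtain ⟨μ, hμ⟩ :=
    (Submodule.mem_span_image_finset_iff_exists_fun' ℝ).1 (hspan ▸ Submodule.mem_top (x := z))
  exact ⟨μ, hμ.symm⟩

lemma exists_inner_eq (hinj : Function.Injective (innerMap u s)) (hcard : s.card = d)
    (μ : Fin m → ℝ) : ∃ p : E d, ∀ j ∈ s, ⟪u j, p⟫ = μ j := by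
  have hdim : Module.finrank ℝ (E d) = Module.finrank ℝ (EuclideanSpace ℝ s) := by simp [hcard]
  obtain ⟨p, hp⟩ := (LinearMap.injective_iff_surjective_of_finrank_eq_finrank hdim).1 hinj
    (WithLp.toLp 2 fun j => μ j)
  exact ⟨p, fun j hj => congr(WithLp.ofLp $hp ⟨j, hj⟩)⟩

lemma sqrt_sum_sq_le_invNormU_mul (hinj : Function.Injective (innerMap u s))
    (hcard : s.card = d) (μ : Fin m → ℝ) :
    √(∑ j ∈ s, μ j ^ 2) ≤ invNormU u s * ‖∑ j ∈ s, μ j • u j‖ := by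
  obtain ⟨p, hp⟩ := exists_inner_eq hinj hcard μ
  set N := √(∑ j ∈ s, μ j ^ 2)
  set w := ∑ j ∈ s, μ j • u j
  have hpN : ‖p‖ ≤ invNormU u s * N := by
    have := norm_le_invNormU_mul hinj p
    rwa [norm_innerMap, Finset.sum_congr rfl fun j hj => by rw [hp j hj]] at this
  have hN : N ^ 2 = ⟪w, p⟫ := by
    rw [Real.sq_sqrt (by positivity), sum_inner]
    exact Finset.sum_congr rfl fun j hj => by rw [real_inner_smul_left, hp j hj, sq]
  have hN2 : N * N ≤ N * (invNormU u s * ‖w‖) := calc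
    N * N = ⟪w, p⟫ := by rw [← hN, sq]
    _ ≤ ‖w‖ * ‖p‖ := real_inner_le_norm w p
    _ ≤ ‖w‖ * (invNormU u s * N) := by gcongr
    _ = N * (invNormU u s * ‖w‖) := by ring
  rcases (show 0 ≤ N from Real.sqrt_nonneg _).eq_or_lt with h | h
  · rw [show N = 0 from h.symm]; exact mul_nonneg invNormU_nonneg (norm_nonneg w)
  · exact le_of_mul_le_mul_left hN2 h

end InnerMap

lemma invNormU_le_alpha {d m : ℕ} (R : FacetRep d m) {V : Finset (E d)} {v : E d} (hv : v ∈ V) :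
    invNormU R.u (R.act v) ≤ alpha R V := by
  refine le_csSup ((V.finite_toSet.image fun v => invNormU R.u (R.act v)).subset ?_).bddAbove
    ⟨v, hv, rfl⟩
  rintro _ ⟨v, hv, rfl⟩
  exact ⟨v, hv, rfl⟩

lemma exists_weight_ge_of_mem_convexHull {F : Type*} [AddCommGroup F] [Module ℝ F]
    [FiniteDimensional ℝ F] {S : Set F} {y : F} (hy : y ∈ convexHull ℝ S) :
    ∃ t : Finset F, ↑t ⊆ S ∧ ∃ w : F → ℝ, (∀ i ∈ t, 0 ≤ w i) ∧ ∑ i ∈ t, w i = 1 ∧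
      ∑ i ∈ t, w i • i = y ∧ ∃ v ∈ t, 1 / (Module.finrank ℝ F + 1 : ℝ) ≤ w v := by
  rw [convexHull_eq_union] at hy
  simp only [Set.mem_iUnion] at hy
  obtain ⟨t, htS, hind, hyt⟩ := hy
  obtain ⟨w, hw0, hw1, hwy⟩ := Finset.mem_convexHull'.1 hyt
  have ht : t.Nonempty := Finset.nonempty_of_ne_empty fun h => by simp [h] at hw1
  have hcard : (t.card : ℝ) ≤ Module.finrank ℝ F + 1 := by
    have := hind.card_le_finrank_succ.trans (Nat.succ_le_succ (Submodule.finrank_le _))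
    exact_mod_cast (Fintype.card_coe t) ▸ this
  obtain ⟨v, hvt, hwv⟩ := Finset.exists_le_of_sum_le ht
    (show ∑ _i ∈ t, 1 / (t.card : ℝ) ≤ ∑ i ∈ t, w i by simp [hw1, ht.card_pos.ne'])
  refine ⟨t, htS, w, hw0, hw1, hwy, v, hvt, le_trans ?_ hwv⟩
  gcongr

namespace FacetRep

variable {d m : ℕ} (R : FacetRep d m)

lemma diam_pos (hd : 1 ≤ d) : 0 < diam R.P := by
  have : NeZero d := ⟨by omega⟩
  obtain ⟨x, hx⟩ := R.fulldim
  refine Metric.diam_pos ?_ R.compact.isBounded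
  rcases Set.eq_singleton_or_nontrivial (interior_subset hx) with h | h
  · rw [h, interior_singleton] at hx
    exact absurd hx (Set.notMem_empty x)
  · exact h

lemma mem_P_iff {x : E d} : x ∈ R.P ↔ ∀ j, 0 ≤ R.q x j := by
  conv_lhs => rw [R.rep]
  rfl

lemma q_nonneg {x : E d} (hx : x ∈ R.P) (j : Fin m) : 0 ≤ R.q x j := R.mem_P_iff.1 hx j

lemma mem_act_iff {x : E d} {j : Fin m} : j ∈ R.act x ↔ R.q x j = 0 := by
  simp [act]

lemma q_continuous (j : Fin m) : Continuous fun x => R.q x j := by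
  unfold q qf
  fun_prop

lemma q_eq_sub (x y : E d) (j : Fin m) :
    R.q x j = R.q y j - ⟪R.u j, x - y⟫ / diam R.P := by
  simp only [q, qf, inner_sub_right]
  ring

lemma q_smul_add_smul {a b : ℝ} (hab : a + b = 1) (x y : E d) (j : Fin m) :
    R.q (a • x + b • y) j = a * R.q x j + b * R.q y j := by
  simp only [q, qf, inner_add_right, real_inner_smul_right]
  linear_combination (-(supp R.P (R.u j)) / diam R.P) * hab

lemma q_sum_smul {t : Finset (E d)} {w : E d → ℝ} (hw : ∑ i ∈ t, w i = 1) (j : Fin m) :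
    R.q (∑ i ∈ t, w i • i) j = ∑ i ∈ t, w i * R.q i j := by
  simp only [q, qf, inner_sum, real_inner_smul_right]
  simp_rw [mul_div_assoc', ← Finset.sum_div, mul_sub, Finset.sum_sub_distrib, ← Finset.sum_mul, hw,
    one_mul]

lemma q_sub_norm_div_diam_le (x y : E d) (j : Fin m) :
    R.q y j - ‖x - y‖ / diam R.P ≤ R.q x j := by
  rw [R.q_eq_sub x y j]
  have h := real_inner_le_norm (R.u j) (x - y)
  rw [(R.facet j).1, one_mul] at h
  have := div_le_div_of_nonneg_right h (Metric.diam_nonneg (s := R.P))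
  linarith

lemma inner_sub_eq_of_mem_act (hd : 1 ≤ d) {x y : E d} {j : Fin m} (hj : j ∈ R.act y) :
    ⟪R.u j, x - y⟫ = -(R.q x j * diam R.P) := by
  have h := R.q_eq_sub x y j
  rw [R.mem_act_iff.1 hj] at h
  field_simp [(R.diam_pos hd).ne'] at h ⊢
  linarith

lemma exists_pos_add_smul_mem (hd : 1 ≤ d) {y : E d} (hy : y ∈ R.P) {z : E d}
    (hz : ∀ j ∈ R.act y, ⟪R.u j, z⟫ ≤ 0) : ∃ t : ℝ, 0 < t ∧ y + t • z ∈ R.P := by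
  have hD := R.diam_pos hd
  have hq : ∀ j, ∀ᶠ t in 𝓝[>] (0 : ℝ), 0 ≤ R.q y j - t * ⟪R.u j, z⟫ / diam R.P := by
    intro j
    by_cases hj : j ∈ R.act y
    · filter_upwards [self_mem_nhdsWithin] with t (ht : 0 < t)
      rw [R.mem_act_iff.1 hj, zero_sub, neg_nonneg]
      exact div_nonpos_of_nonpos_of_nonneg (mul_nonpos_of_nonneg_of_nonpos ht.le (hz j hj)) hD.le
    · have hpos : 0 < R.q y j := (R.q_nonneg hy j).lt_of_ne' (mt R.mem_act_iff.2 hj)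
      have hcont : Continuous fun t : ℝ => R.q y j - t * ⟪R.u j, z⟫ / diam R.P := by fun_prop
      exact nhdsWithin_le_nhds <|
        ((hcont.tendsto 0).eventually (lt_mem_nhds (by simpa using hpos))).mono fun t ht => ht.le
  obtain ⟨t, hqt, ht⟩ := ((Filter.eventually_all.2 hq).and self_mem_nhdsWithin).exists
  refine ⟨t, ht, R.mem_P_iff.2 fun j => ?_⟩
  rw [R.q_eq_sub _ y, add_sub_cancel_left, real_inner_smul_right]
  exact hqt j

lemma innerMap_injective (hd : 1 ≤ d) {v : E d} (hv : v ∈ vertices R.P) :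
    Function.Injective (innerMap R.u (R.act v)) := by
  refine (injective_iff_map_eq_zero _).2 fun z hz => ?_
  have hz' : ∀ j ∈ R.act v, ⟪R.u j, z⟫ = 0 := fun j hj => congr(WithLp.ofLp $hz ⟨j, hj⟩)
  obtain ⟨t₁, ht₁, h₁⟩ := R.exists_pos_add_smul_mem hd hv.1 fun j hj => (hz' j hj).le
  obtain ⟨t₂, ht₂, h₂⟩ := R.exists_pos_add_smul_mem hd hv.1 (z := -z) fun j hj => by
    rw [inner_neg_right, hz' j hj, neg_zero]
  have hseg : v ∈ openSegment ℝ (v + t₁ • z) (v + t₂ • -z) := by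
    refine ⟨t₂ / (t₁ + t₂), t₁ / (t₁ + t₂), by positivity, by positivity, by field_simp; ring, ?_⟩
    match_scalars <;> field_simp <;> ring
  have h := hv.2 h₁ h₂ hseg
  rw [add_eq_left, smul_eq_zero] at h
  exact h.resolve_left ht₁.ne'

lemma isExtreme_setOf_q_eq_zero (s : Finset (Fin m)) :
    IsExtreme ℝ R.P {x ∈ R.P | ∀ j ∈ s, R.q x j = 0} := by
  refine ⟨fun x hx => hx.1, fun x₁ hx₁ x₂ hx₂ x hx ⟨a, b, ha, hb, hab, hx_eq⟩ => ⟨hx₁, fun j hj => ?_⟩⟩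
  have h0 := hx.2 j hj
  rw [← hx_eq, R.q_smul_add_smul hab] at h0
  have h := (add_eq_zero_iff_of_nonneg (mul_nonneg ha.le (R.q_nonneg hx₁ j))
    (mul_nonneg hb.le (R.q_nonneg hx₂ j))).1 h0
  exact (mul_eq_zero.1 h.1).resolve_left ha.ne'

lemma exists_vertex_act_subset {y : E d} (hy : y ∈ R.P) :
    ∃ v ∈ vertices R.P, R.act y ⊆ R.act v := by
  have hcpt : IsCompact {x ∈ R.P | ∀ j ∈ R.act y, R.q x j = 0} := by
    have hcl : IsClosed (⋂ j ∈ R.act y, {x | R.q x j = 0}) :=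
      isClosed_biInter fun j _ => isClosed_eq (R.q_continuous j) continuous_const
    convert R.compact.inter_right hcl using 1
    ext
    simp
  obtain ⟨v, hv⟩ := hcpt.extremePoints_nonempty ⟨y, hy, fun j hj => R.mem_act_iff.1 hj⟩
  exact ⟨v, (R.isExtreme_setOf_q_eq_zero _).extremePoints_subset_extremePoints hv,
    fun j hj => R.mem_act_iff.2 (hv.1.2 j hj)⟩

lemma inner_nonpos_of_normal (hd : 1 ≤ d) {y z p : E d} (hy : y ∈ R.P)
    (hz : ∀ w ∈ R.P, ⟪z, w - y⟫ ≤ 0) (hp : ∀ j ∈ R.act y, ⟪R.u j, p⟫ ≤ 0) : ⟪z, p⟫ ≤ 0 := by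
  obtain ⟨t, ht, hmem⟩ := R.exists_pos_add_smul_mem hd hy hp
  have h := hz _ hmem
  rw [add_sub_cancel_left, real_inner_smul_right] at h
  exact nonpos_of_mul_nonpos_right h ht

/-- The sign of `μ i` is read off by moving `y` along the dual vector `p` with
`⟪u j, p⟫ = δ_ij`, which stays in `P` for small steps in both directions when `i ∉ act y`. -/
lemma exists_nonneg_coeffs_of_normal (hd : 1 ≤ d) {v : E d} (hv : v ∈ vertices R.P)
    (hcard : (R.act v).card = d) {y z : E d} (hy : y ∈ R.P) (hyv : R.act y ⊆ R.act v)
    (hz : ∀ w ∈ R.P, ⟪z, w - y⟫ ≤ 0) :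
    ∃ μ : Fin m → ℝ, z = ∑ j ∈ R.act v, μ j • R.u j ∧
      ∀ i ∈ R.act v, 0 ≤ μ i ∧ (i ∉ R.act y → μ i = 0) := by
  have hinj := R.innerMap_injective hd hv
  obtain ⟨μ, rfl⟩ := exists_eq_sum_smul hinj z
  refine ⟨μ, rfl, fun i hi => ?_⟩
  obtain ⟨p, hp⟩ := exists_inner_eq hinj hcard (Pi.single i 1)
  have hμp : ⟪∑ j ∈ R.act v, μ j • R.u j, p⟫ = μ i := by
    simp_rw [sum_inner, real_inner_smul_left]
    rw [Finset.sum_congr rfl fun j hj => by rw [hp j hj]]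
    simp [Pi.single_apply, hi]
  have hneg := R.inner_nonpos_of_normal hd hy hz (p := -p) fun j hj => by
    rw [inner_neg_right, hp j (hyv hj), neg_nonpos, Pi.single_apply]
    split_ifs <;> norm_num
  rw [inner_neg_right, hμp, neg_nonpos] at hneg
  refine ⟨hneg, fun hiy => le_antisymm ?_ hneg⟩
  rw [← hμp]
  refine R.inner_nonpos_of_normal hd hy hz fun j hj => ?_
  rw [hp j (hyv hj), Pi.single_apply, if_neg (ne_of_mem_of_not_mem hj hiy)]

lemma norm_sub_le_of_normal (hd : 1 ≤ d) {v : E d} (hv : v ∈ vertices R.P)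
    (hcard : (R.act v).card = d) {x y : E d} (hy : y ∈ R.P) (hyv : R.act y ⊆ R.act v)
    (hxy : ∀ w ∈ R.P, ⟪x - y, w - y⟫ ≤ 0) {ε : ℝ} (hε : 0 ≤ ε)
    (hx : ∀ j ∈ R.act y, -ε ≤ R.q x j) :
    ‖x - y‖ ≤ ε * √d * invNormU R.u (R.act v) * diam R.P := by
  obtain ⟨μ, hμ, hμ_nonneg⟩ := R.exists_nonneg_coeffs_of_normal hd hv hcard hy hyv hxy
  have hD := R.diam_pos hd
  set β := invNormU R.u (R.act v)
  have hterm : ∀ j ∈ R.act v, μ j * ⟪R.u j, x - y⟫ ≤ μ j * (ε * diam R.P) := fun j hj => by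
    by_cases hjy : j ∈ R.act y
    · rw [R.inner_sub_eq_of_mem_act hd hjy]
      exact mul_le_mul_of_nonneg_left (by nlinarith [hx j hjy]) (hμ_nonneg j hj).1
    · rw [(hμ_nonneg j hj).2 hjy, zero_mul, zero_mul]
  have hsum : ∑ j ∈ R.act v, μ j ≤ √d * √(∑ j ∈ R.act v, μ j ^ 2) := by
    simpa [hcard] using Real.sum_mul_le_sqrt_mul_sqrt (R.act v) (fun _ => 1) μ
  have hsq : ‖x - y‖ * ‖x - y‖ ≤ ‖x - y‖ * (ε * √d * β * diam R.P) := calc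
    ‖x - y‖ * ‖x - y‖ = ∑ j ∈ R.act v, μ j * ⟪R.u j, x - y⟫ := by
      rw [← real_inner_self_eq_norm_mul_norm]
      nth_rewrite 1 [hμ]
      simp_rw [sum_inner, real_inner_smul_left]
    _ ≤ ∑ j ∈ R.act v, μ j * (ε * diam R.P) := Finset.sum_le_sum hterm
    _ = ε * diam R.P * ∑ j ∈ R.act v, μ j := by rw [← Finset.sum_mul, mul_comm]
    _ ≤ ε * diam R.P * (√d * (β * ‖x - y‖)) := by
      gcongr
      refine hsum.trans (mul_le_mul_of_nonneg_left ?_ (Real.sqrt_nonneg _))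
      rw [hμ]
      exact sqrt_sum_sq_le_invNormU_mul (R.innerMap_injective hd hv) hcard μ
    _ = ‖x - y‖ * (ε * √d * β * diam R.P) := by ring
  rcases (norm_nonneg (x - y)).eq_or_lt with h | h
  · rw [← h]
    exact mul_nonneg (mul_nonneg (mul_nonneg hε (Real.sqrt_nonneg _)) invNormU_nonneg) hD.le
  · exact le_of_mul_le_mul_left hsq h

lemma exists_mem_norm_sub_le (hd : 1 ≤ d) (hs : R.Simple) {V : Finset (E d)}
    (hV : (↑V : Set (E d)) = vertices R.P) {ε : ℝ} (hε : 0 ≤ ε) {x : E d} (hx : x ∈ R.Peps ε) :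
    ∃ y ∈ R.P, ‖x - y‖ ≤ ε * √d * alpha R V * diam R.P := by
  obtain ⟨y, hy, hmin⟩ := exists_norm_eq_iInf_of_complete_convex
    (R.fulldim.mono interior_subset) R.compact.isClosed.isComplete R.convex x
  obtain ⟨v, hv, hyv⟩ := R.exists_vertex_act_subset hy
  refine ⟨y, hy, (R.norm_sub_le_of_normal hd hv (hs v hv) hy hyv
    ((norm_eq_iInf_iff_real_inner_le_zero R.convex hy).1 hmin) hε fun j _ => hx j).trans ?_⟩
  gcongr
  exact invNormU_le_alpha R (by rw [← Finset.mem_coe, hV]; exact hv)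

lemma one_sub_gam_le (hfin : (vertices R.P).Finite) {v : E d} (hv : v ∈ vertices R.P)
    {j : Fin m} (hj : j ∉ R.act v) : 1 - R.gam ≤ R.q v j := by
  have hbdd : BddAbove {c | ∃ v ∈ vertices R.P, ∃ j, R.q v j ≠ 0 ∧ c = 1 - R.q v j} := by
    refine ((hfin.prod Set.finite_univ).image fun p : E d × Fin m => 1 - R.q p.1 p.2).subset ?_
      |>.bddAbove
    rintro _ ⟨w, hw, i, -, rfl⟩
    exact ⟨(w, i), ⟨hw, Set.mem_univ _⟩, rfl⟩
  have := le_csSup hbdd ⟨v, hv, j, mt R.mem_act_iff.2 hj, rfl⟩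
  rw [← gam] at this
  linarith

lemma exists_vertex_le_q (hfin : (vertices R.P).Finite) {y : E d} (hy : y ∈ R.P) :
    ∃ v ∈ vertices R.P, ∀ j ∉ R.act v, (1 - R.gam) / (1 + d) ≤ R.q y j := by
  have hhull : y ∈ convexHull ℝ (vertices R.P) := by
    rw [← (hfin.isCompact_convexHull (𝕜 := ℝ)).isClosed.closure_eq,
      vertices, closure_convexHull_extremePoints R.compact R.convex]
    exact hy
  obtain ⟨t, htV, w, hw0, hw1, hwy, v, hvt, hwv⟩ := exists_weight_ge_of_mem_convexHull hhull
  refine ⟨v, htV hvt, fun j hj => ?_⟩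
  rcases le_or_gt 0 (1 - R.gam) with hγ | hγ
  · rw [finrank_euclideanSpace_fin] at hwv
    calc (1 - R.gam) / (1 + d) = 1 / (d + 1) * (1 - R.gam) := by ring
      _ ≤ w v * R.q v j := mul_le_mul hwv (R.one_sub_gam_le hfin (htV hvt) hj) hγ (hw0 v hvt)
      _ ≤ ∑ i ∈ t, w i * R.q i j :=
        Finset.single_le_sum (fun i hi => mul_nonneg (hw0 i hi) (R.q_nonneg (htV hi).1 j)) hvt
      _ = R.q y j := by rw [← hwy, R.q_sum_smul hw1]
  · linarith [div_neg_of_neg_of_pos hγ (by positivity : (0 : ℝ) < 1 + d), R.q_nonneg hy j]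

end FacetRep

theorem statement12 (d m : ℕ) (hd : 2 ≤ d) (R : FacetRep d m) (hs : R.Simple)
    (V : Finset (E d)) (hV : (↑V : Set (E d)) = vertices R.P)
    (ε : ℝ) (hε : 0 < ε)
    (hδ : 0 < (1 - R.gam) / (1 + d) - ε * Real.sqrt d * alpha R V) :
    R.Peps ε = ⋃ v ∈ (↑V : Set (E d)),
      R.Pv v ε ((1 - R.gam) / (1 + d) - ε * Real.sqrt d * alpha R V) := by
  have hd1 : 1 ≤ d := by omega
  have hfin : (vertices R.P).Finite := hV ▸ V.finite_toSet
  ext x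
  simp only [Set.mem_iUnion, exists_prop, hV]
  constructor
  · intro hx
    obtain ⟨y, hy, hxy⟩ := R.exists_mem_norm_sub_le hd1 hs hV hε.le hx
    obtain ⟨v, hv, hqy⟩ := R.exists_vertex_le_q hfin hy
    refine ⟨v, hv, fun j _ => hx j, fun j hj => ?_⟩
    have hdist : ‖x - y‖ / diam R.P ≤ ε * √d * alpha R V := by
      rwa [div_le_iff₀ (R.diam_pos hd1)]
    linarith [R.q_sub_norm_div_diam_le x y j, hqy j hj]
  · rintro ⟨v, -, hxv⟩ j
    by_cases hj : j ∈ R.act v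
    · exact hxv.1 j hj
    · linarith [hxv.2 j hj]

end AverkovHenk
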